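/- arXiv:2106.12031 — 9 statements merged into one kernel-verified Lean document; each statement's English description precedes it below -/
import Mathlib

section
/- Let R be a (possibly nonunital) ring and let R^u = R ⊕ ℤ be its standard unitization with multiplication (x,k)(y,l) = (xy + lx + ky, kl). The monoid (R, ∗) with x ∗ y = x + y + xy is directly finite (i.e., x ∗ y = 0 implies y ∗ x = 0) if and only if R^u is directly finite (i.e., ab = 1 implies ba = 1 for all a, b ∈ R^u). -/
/-!
Both sides of `ab = 1` in the unitization have scalar parts that are mutually inverse, so
`a = a₀ • (1 + x)` and `b = b₀ • (1 + y)` with `a₀ b₀ = 1`; the scalars then cancel from both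
`ab` and `ba`. On elements `1 + x` the unitization multiplies like `(R, ∗)`, since
`(1 + x)(1 + y) = 1 + x ∗ y`.
-/

namespace Unitization

variable {S R : Type*} [CommSemiring S] [NonUnitalSemiring R] [Module S R]

theorem fst_smul_one_add_inr_of_fst_mul_eq_one {a : Unitization S R} {v : S}
    (h : a.fst * v = 1) : a.fst • (1 + ((v • a.snd : R) : Unitization S R)) = a := by
  ext
  · simp
  · simp [smul_smul, h]

variable [IsScalarTower S R R] [SMulCommClass S R R]

theorem one_add_inr_mul_one_add_inr (x y : R) :
    (1 + (x : Unitization S R)) * (1 + y) = 1 + ↑(x + y + x * y) := by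
  simp only [mul_add, add_mul, one_mul, mul_one, inr_add, inr_mul]
  abel

theorem one_add_inr_mul_one_add_inr_eq_one_iff {x y : R} :
    (1 + (x : Unitization S R)) * (1 + y) = 1 ↔ x + y + x * y = 0 := by
  rw [one_add_inr_mul_one_add_inr, Unitization.ext_iff]
  simp

theorem mul_eq_one_add_inr_mul_one_add_inr {a b : Unitization S R} (h : a.fst * b.fst = 1) :
    a * b = (1 + ((b.fst • a.snd : R) : Unitization S R)) * (1 + ↑(a.fst • b.snd)) := by
  calc a * b = (a.fst • (1 + ((b.fst • a.snd : R) : Unitization S R))) *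
        (b.fst • (1 + ↑(a.fst • b.snd))) := by
        rw [fst_smul_one_add_inr_of_fst_mul_eq_one h,
          fst_smul_one_add_inr_of_fst_mul_eq_one (mul_comm a.fst b.fst ▸ h)]
    _ = _ := by rw [smul_mul_smul_comm, h, one_smul]

theorem quasiMul_eq_zero_comm_iff_mul_eq_one_comm :
    (∀ x y : R, x + y + x * y = 0 → y + x + y * x = 0) ↔
      ∀ a b : Unitization S R, a * b = 1 → b * a = 1 := by
  refine ⟨fun hR a b hab => ?_, fun hU x y hxy => ?_⟩
  · have hfst : a.fst * b.fst = 1 := by simpa using congr($(hab).fst)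
    rw [mul_eq_one_add_inr_mul_one_add_inr hfst, one_add_inr_mul_one_add_inr_eq_one_iff] at hab
    rw [mul_eq_one_add_inr_mul_one_add_inr (mul_comm a.fst b.fst ▸ hfst),
      one_add_inr_mul_one_add_inr_eq_one_iff]
    exact hR _ _ hab
  · rw [← one_add_inr_mul_one_add_inr_eq_one_iff (S := S)] at hxy ⊢
    exact hU _ _ hxy

end Unitization

/-- For a possibly nonunital ring `R`, the monoid `(R, ∗)` with
`x ∗ y = x + y + x*y` is directly finite iff the standard unitization
`R ⊕ ℤ` is directly finite. -/
theorem stmt_1 (R : Type*) [NonUnitalRing R] :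
    (∀ x y : R, x + y + x * y = 0 → y + x + y * x = 0) ↔
    (∀ a b : Unitization ℤ R, a * b = 1 → b * a = 1) :=
  Unitization.quasiMul_eq_zero_comm_iff_mul_eq_one_comm
end

section
/- Let R be a (possibly nonunital) ring with stable range one: for all x, y ∈ R such that 0 ∈ x ∗ R + yR, there is z ∈ R with 0 ∈ (x + yz) ∗ R (where x ∗ r = x + r + xr). Then R is directly finite, i.e., the monoid (R, ∗) is directly finite: x ∗ y = 0 implies y ∗ x = 0. -/
/-!
In the monoid `(R, ∗)` with identity `0`, suppose `x ∗ y = 0` and put `t = y ∗ x`. Then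
`t ∗ y = y`, i.e. `t + t y = 0`, so `0 ∈ y ∗ R + t R`, and stable range one gives `z` such that
`p = y + t z` has a right inverse. On the other hand `x ∗ p = 0` for every `z`, because
`(1 + x) t = (x ∗ y)(1 + x)`. So `p` is a right inverse of `x` that is itself right invertible,
hence a two-sided inverse of `x`; it must then coincide with the right inverse `y`.
-/

theorem mul_eq_one_symm_of_mul_eq_one_of_mul_eq_one {M : Type*} [Monoid M] {a b c d : M}
    (hab : a * b = 1) (hac : a * c = 1) (hcd : c * d = 1) : b * a = 1 := by
  have hca : c * a = 1 := left_inv_eq_right_inv hac hcd ▸ hcd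
  exact left_inv_eq_right_inv hca hab ▸ hca

namespace PreQuasiregular

variable {R : Type*} [NonUnitalSemiring R]

theorem mk_mul_mk_eq_one_iff {a b : R} : mk a * mk b = 1 ↔ a + b + a * b = 0 := by
  rw [add_comm a b]
  constructor
  · exact congrArg val
  · intro h
    exact congrArg mk h

end PreQuasiregular

section NonUnitalRing

variable {R : Type*} [NonUnitalRing R] {x y : R}

theorem quasi_mul_eq_zero_symm_of_quasi_mul_eq_zero {a b c d : R} (hab : a + b + a * b = 0)
    (hac : a + c + a * c = 0) (hcd : c + d + c * d = 0) : b + a + b * a = 0 :=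
  PreQuasiregular.mk_mul_mk_eq_one_iff.mp <| mul_eq_one_symm_of_mul_eq_one_of_mul_eq_one
    (PreQuasiregular.mk_mul_mk_eq_one_iff.mpr hab) (PreQuasiregular.mk_mul_mk_eq_one_iff.mpr hac)
    (PreQuasiregular.mk_mul_mk_eq_one_iff.mpr hcd)

theorem quasi_mul_add_quasi_mul_mul_eq_zero (hxy : x + y + x * y = 0) :
    (y + x + y * x) + (y + x + y * x) * y = 0 := by
  have key : (y + x + y * x) + (y + x + y * x) * y = (x + y + x * y) + y * (x + y + x * y) := by
    noncomm_ring
  rw [key, hxy, mul_zero, add_zero]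

theorem quasi_mul_add_mul_eq_zero (hxy : x + y + x * y = 0) (z : R) :
    x + (y + (y + x + y * x) * z) + x * (y + (y + x + y * x) * z) = 0 := by
  have key : x + (y + (y + x + y * x) * z) + x * (y + (y + x + y * x) * z)
      = (x + y + x * y) + ((x + y + x * y) + (x + y + x * y) * x) * z := by
    noncomm_ring
  rw [key, hxy, zero_mul, add_zero, zero_mul, add_zero]

end NonUnitalRing

/-- A possibly nonunital ring with stable range one (Vaserstein's nonunital
version, phrased via `x ∗ y = x + y + x*y`) is directly finite in the
nonunital sense. -/
theorem stmt_4 (R : Type*) [NonUnitalRing R]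
    (hsr : ∀ x y : R, (∃ u v : R, (x + u + x * u) + y * v = 0) →
      ∃ z w : R, (x + y * z) + w + (x + y * z) * w = 0) :
    ∀ x y : R, x + y + x * y = 0 → y + x + y * x = 0 := by
  intro x y hxy
  obtain ⟨z, w, hw⟩ := hsr y (y + x + y * x) ⟨x, y, quasi_mul_add_quasi_mul_mul_eq_zero hxy⟩
  exact quasi_mul_eq_zero_symm_of_quasi_mul_eq_zero hxy (quasi_mul_add_mul_eq_zero hxy z) hw
end

section
/- Let R be a (possibly nonunital) ring such that every finite subset of R is contained in a corner eRe that is a clean unital ring. Then R is clean in the nonunital sense: for every x ∈ R there exist an idempotent f ∈ R and an element u ∈ R invertible in the monoid (R, ∗) (i.e., there is v with u ∗ v = v ∗ u = 0, where a ∗ b = a + b + ab) such that x = f + u. -/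
/-!
Given `x`, take a clean corner `eRe` containing `x` and decompose its element `e + x` as
`u + f` with `u` a unit of `eRe` with inverse `v`. Then `x = f + (u - e)`, and `u - e` is
quasi-invertible in `R` with quasi-inverse `v - e`, because `e` is the identity of the corner.
-/

namespace IsIdempotentElem

variable {R : Type*} [NonUnitalRing R] {e a : R}

theorem mul_eq_self_of_mul_mul_eq (he : IsIdempotentElem e) (ha : e * a * e = a) :
    e * a = a := by
  rw [← ha, ← mul_assoc, ← mul_assoc, he.eq]

theorem mul_eq_self_of_mul_mul_eq' (he : IsIdempotentElem e) (ha : e * a * e = a) :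
    a * e = a := by
  rw [← ha, mul_assoc, he.eq]

theorem mul_add_mul_eq_add_of_mul_mul_eq (he : IsIdempotentElem e) (ha : e * a * e = a) :
    e * (e + a) * e = e + a := by
  rw [mul_add, add_mul, ha, he.eq, he.eq]

theorem sub_add_sub_add_mul_eq_zero (he : IsIdempotentElem e) {u v : R} (huv : u * v = e)
    (hue : u * e = u) (hev : e * v = v) : u - e + (v - e) + (u - e) * (v - e) = 0 := by
  rw [sub_mul, mul_sub, mul_sub, huv, hue, hev, he.eq]
  abel

end IsIdempotentElem

/-- If every finite subset of a possibly nonunital ring `R` is contained in a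
clean corner `eRe`, then `R` is clean in the nonunital sense: every `x` is the
sum of an idempotent and an element invertible in the monoid `(R, ∗)` with
`a ∗ b = a + b + a*b`. -/
theorem stmt_6 (R : Type*) [NonUnitalRing R]
    (h : ∀ s : Finset R, ∃ e : R, e * e = e ∧ (∀ x ∈ s, e * x * e = x) ∧
      (∀ a : R, e * a * e = a → ∃ f u v : R, f * f = f ∧ e * f * e = f ∧
        e * u * e = u ∧ e * v * e = v ∧ u * v = e ∧ v * u = e ∧ a = u + f)) :
    ∀ x : R, ∃ f u : R, f * f = f ∧
      (∃ v : R, u + v + u * v = 0 ∧ v + u + v * u = 0) ∧ x = f + u := by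
  intro x
  obtain ⟨e, he, hcorner, hclean⟩ := h {x}
  have he : IsIdempotentElem e := he
  have hx : e * x * e = x := hcorner x (Finset.mem_singleton_self x)
  obtain ⟨f, u, v, hf, -, hu, hv, huv, hvu, hsum⟩ :=
    hclean (e + x) (he.mul_add_mul_eq_add_of_mul_mul_eq hx)
  refine ⟨f, u - e, hf, ⟨v - e, ?_, ?_⟩, ?_⟩
  · exact he.sub_add_sub_add_mul_eq_zero huv (he.mul_eq_self_of_mul_mul_eq' hu)
      (he.mul_eq_self_of_mul_mul_eq hv)
  · exact he.sub_add_sub_add_mul_eq_zero hvu (he.mul_eq_self_of_mul_mul_eq' hv)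
      (he.mul_eq_self_of_mul_mul_eq hu)
  · rw [← add_sub_cancel_left e x, hsum]
    abel
end

section
/- Let R be a unital ring graded by a group Γ with identity ε. Then R is graded clean (every homogeneous element is the sum of a homogeneous unit and a homogeneous idempotent) if and only if the ε-component R_ε is a clean ring and, for every γ ≠ ε, every nonzero element of R_γ is invertible in R. -/
/-!
Homogeneous idempotents have degree `0`, since `e = e * e` lies in both `𝒜 γ` and `𝒜 (γ + γ)`,
and the inverse of a homogeneous unit of degree `γ` may be replaced by its component of
degree `-γ`. Hence a graded clean decomposition of an element of `𝒜 0` is a clean decomposition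
inside `𝒜 0`. For a nonzero `x ∈ 𝒜 γ` with `γ ≠ 0`, a decomposition `x = u + e` forces the
unit `u` to have nonzero degree, and then the degree-`0` component of `x = u + e` gives `e = 0`,
so `x = u` is a unit.
-/

open DirectSum

namespace DirectSum

section Decomposition

variable {ι R : Type*} [DecidableEq ι] [AddCommGroup R] (𝒜 : ι → AddSubgroup R)
  [Decomposition 𝒜]

theorem eq_zero_of_mem_of_mem_of_ne {x : R} {i j : ι} (hi : x ∈ 𝒜 i) (hj : x ∈ 𝒜 j)
    (hij : i ≠ j) : x = 0 := by
  rw [← decompose_of_mem_same 𝒜 hi, decompose_of_mem_ne 𝒜 hj hij.symm]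

theorem eq_zero_of_add_eq_of_mem {x u e : R} {i j k : ι} (hx : x ∈ 𝒜 i) (hu : u ∈ 𝒜 j)
    (he : e ∈ 𝒜 k) (hxue : x = u + e) (hki : k ≠ i) (hkj : k ≠ j) : e = 0 := by
  have hcomp := congrArg (fun y ↦ (decompose 𝒜 y k : R)) hxue
  simp only [decompose_add, add_apply, AddSubgroup.coe_add] at hcomp
  rwa [decompose_of_mem_ne 𝒜 hx hki.symm, decompose_of_mem_ne 𝒜 hu hkj.symm,
    decompose_of_mem_same 𝒜 he, zero_add, eq_comm] at hcomp

end Decomposition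

section GradedRing

variable {ι R : Type*} [DecidableEq ι] [AddGroup ι] [Ring R] (𝒜 : ι → AddSubgroup R)

theorem mem_zero_of_isIdempotentElem [SetLike.GradedMonoid 𝒜] [Decomposition 𝒜] {e : R}
    {i : ι} (he : e ∈ 𝒜 i) (hee : IsIdempotentElem e) : e ∈ 𝒜 0 := by
  by_cases hi : i = 0
  · exact hi ▸ he
  · have he' : e ∈ 𝒜 (i + i) := hee ▸ SetLike.mul_mem_graded he he
    have hii : i ≠ i + i := fun h ↦ hi (by simpa using h)
    exact eq_zero_of_mem_of_mem_of_ne 𝒜 he he' hii ▸ zero_mem _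

theorem exists_mem_neg_mul_eq_one_of_isUnit [GradedRing 𝒜] {u : R} {i : ι} (hu : u ∈ 𝒜 i)
    (hunit : IsUnit u) : ∃ v ∈ 𝒜 (-i), u * v = 1 ∧ v * u = 1 := by
  obtain ⟨w, rfl⟩ := hunit
  refine ⟨decompose 𝒜 (↑w⁻¹ : R) (-i), SetLike.coe_mem _, ?_, ?_⟩
  · rw [← coe_decompose_mul_add_of_left_mem 𝒜 hu, Units.mul_inv, add_neg_cancel,
      decompose_of_mem_same 𝒜 (SetLike.one_mem_graded 𝒜)]
  · rw [← coe_decompose_mul_add_of_right_mem 𝒜 hu, Units.inv_mul, neg_add_cancel,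
      decompose_of_mem_same 𝒜 (SetLike.one_mem_graded 𝒜)]

end GradedRing

end DirectSum

/-- A `Γ`-graded unital ring is graded clean iff its `ε`-component is a clean
ring and every nonzero element of `R_γ`, `γ ≠ ε`, is invertible in `R`. -/
theorem stmt_8 {Γ R : Type*} [AddGroup Γ] [DecidableEq Γ] [Ring R]
    (𝒜 : Γ → AddSubgroup R) [SetLike.GradedMonoid 𝒜] [DirectSum.Decomposition 𝒜] :
    (∀ x : R, (∃ γ, x ∈ 𝒜 γ) →
      ∃ u e : R, (∃ γ, u ∈ 𝒜 γ) ∧ IsUnit u ∧ (∃ γ, e ∈ 𝒜 γ) ∧ e * e = e ∧ x = u + e)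
    ↔ ((∀ x ∈ 𝒜 (0 : Γ), ∃ u e : R, u ∈ 𝒜 (0 : Γ) ∧ e ∈ 𝒜 (0 : Γ) ∧ e * e = e ∧
          (∃ v ∈ 𝒜 (0 : Γ), u * v = 1 ∧ v * u = 1) ∧ x = u + e) ∧
        (∀ γ : Γ, γ ≠ 0 → ∀ x ∈ 𝒜 γ, x ≠ 0 → IsUnit x)) := by
  let _ : GradedRing 𝒜 := {}
  constructor
  · intro hclean
    refine ⟨fun x hx ↦ ?_, fun γ hγ x hx hx0 ↦ ?_⟩
    · obtain ⟨u, e, -, hunit, ⟨_, he⟩, hee, rfl⟩ := hclean x ⟨0, hx⟩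
      have he0 := mem_zero_of_isIdempotentElem 𝒜 he hee
      have hu0 : u ∈ 𝒜 0 := by simpa using sub_mem hx he0
      obtain ⟨v, hv, huv, hvu⟩ := exists_mem_neg_mul_eq_one_of_isUnit 𝒜 hu0 hunit
      exact ⟨u, e, hu0, he0, hee, ⟨v, neg_zero (G := Γ) ▸ hv, huv, hvu⟩, rfl⟩
    · obtain ⟨u, e, ⟨α, hu⟩, hunit, ⟨_, he⟩, hee, hxue⟩ := hclean x ⟨γ, hx⟩
      have he0 := mem_zero_of_isIdempotentElem 𝒜 he hee
      have hα : α ≠ 0 := by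
        rintro rfl
        exact hx0 (eq_zero_of_mem_of_mem_of_ne 𝒜 hx (hxue ▸ add_mem hu he0) hγ)
      rw [hxue, eq_zero_of_add_eq_of_mem 𝒜 hx hu he0 hxue hγ.symm hα.symm, add_zero]
      exact hunit
  · rintro ⟨hclean₀, hunit⟩ x ⟨γ, hx⟩
    by_cases hx₀ : x ∈ 𝒜 0
    · obtain ⟨u, e, hu, he, hee, ⟨v, -, huv, hvu⟩, hxue⟩ := hclean₀ x hx₀
      exact ⟨u, e, ⟨0, hu⟩, ⟨⟨u, v, huv, hvu⟩, rfl⟩, ⟨0, he⟩, hee, hxue⟩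
    · have hγ : γ ≠ 0 := by rintro rfl; exact hx₀ hx
      have hx0 : x ≠ 0 := by rintro rfl; exact hx₀ (zero_mem _)
      exact ⟨x, 0, ⟨γ, hx⟩, hunit γ hγ x hx hx0, ⟨0, zero_mem _⟩, mul_zero 0, (add_zero x).symm⟩
end

section
/- Let R be a Γ-graded unital ring. Then R satisfies the graded right exchange condition (for every homogeneous x there is a homogeneous idempotent e with e ∈ xR and 1 − e ∈ (1 − x)R) if and only if R satisfies the graded lifting condition (for every homogeneous x there is a homogeneous idempotent e with e − x ∈ (x − x²)R). -/
/-! For a fixed `x`, one and the same element `e` witnesses both conditions. If `e = x r` and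
`1 - e = (1 - x) s`, then `x r + (1 - x) s = 1` and
`e - x = x r - x (x r + (1 - x) s) = (x - x²)(r - s)`. Conversely, from `e = x + (x - x²) r` one reads
off `e = x (1 + (1 - x) r)` and `1 - e = (1 - x)(1 - x r)`. -/

theorem dvd_and_one_sub_dvd_one_sub_iff {R : Type*} [Ring R] (x e : R) :
    x ∣ e ∧ 1 - x ∣ 1 - e ↔ x - x * x ∣ e - x := by
  constructor
  · rintro ⟨⟨r, hr⟩, ⟨s, hs⟩⟩
    have hsum : x * r + (1 - x) * s = 1 := by rw [← hr, ← hs, add_sub_cancel]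
    refine ⟨r - s, ?_⟩
    calc e - x = x * r - x * (x * r + (1 - x) * s) := by rw [hsum, mul_one, hr]
      _ = (x - x * x) * (r - s) := by noncomm_ring
  · rintro ⟨r, hr⟩
    rw [sub_eq_iff_eq_add] at hr
    exact ⟨⟨1 + (1 - x) * r, by rw [hr]; noncomm_ring⟩, ⟨1 - x * r, by rw [hr]; noncomm_ring⟩⟩

theorem stmt_10_general {Γ R : Type*} [Ring R]
    (𝒜 : Γ → AddSubgroup R) :
    (∀ x : R, (∃ γ, x ∈ 𝒜 γ) → ∃ e : R, (∃ γ, e ∈ 𝒜 γ) ∧ e * e = e ∧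
        (∃ r : R, e = x * r) ∧ (∃ s : R, 1 - e = (1 - x) * s))
    ↔ (∀ x : R, (∃ γ, x ∈ 𝒜 γ) → ∃ e : R, (∃ γ, e ∈ 𝒜 γ) ∧ e * e = e ∧
        (∃ r : R, e - x = (x - x * x) * r)) :=
  forall₂_congr fun x _ => exists_congr fun e =>
    and_congr_right' <| and_congr_right' <| dvd_and_one_sub_dvd_one_sub_iff x e

/-- For a `Γ`-graded unital ring, the graded right exchange condition is
equivalent to the graded lifting condition. -/
theorem stmt_10 {Γ R : Type*} [AddGroup Γ] [DecidableEq Γ] [Ring R]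
    (𝒜 : Γ → AddSubgroup R) [SetLike.GradedMonoid 𝒜] [DirectSum.Decomposition 𝒜] :
    (∀ x : R, (∃ γ, x ∈ 𝒜 γ) → ∃ e : R, (∃ γ, e ∈ 𝒜 γ) ∧ e * e = e ∧
        (∃ r : R, e = x * r) ∧ (∃ s : R, 1 - e = (1 - x) * s))
    ↔ (∀ x : R, (∃ γ, x ∈ 𝒜 γ) → ∃ e : R, (∃ γ, e ∈ 𝒜 γ) ∧ e * e = e ∧
        (∃ r : R, e - x = (x - x * x) * r)) :=
  stmt_10_general 𝒜
end

section
/- Let R be a Γ-graded unital ring that is graded clean. Then R is graded right exchange: for every homogeneous x ∈ R there is a homogeneous idempotent f with f ∈ xR and 1 − f ∈ (1 − x)R. (Proof via: if x = e + u is a graded clean decomposition, then f = u^{-1}(1 − e)u is a homogeneous idempotent satisfying (x − x²)u^{-1} = f − x.) -/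
/-!
If `x = e + u` with `e` idempotent and `u` a unit, then `f = u (1 - e) u⁻¹` is an idempotent with
`f - x = (x - x²) u⁻¹`, and any `f` with `f - x ∈ (x - x²) R` satisfies `f ∈ x R` and
`1 - f ∈ (1 - x) R`. In the graded setting `f` is homogeneous: the inverse of a homogeneous unit of
degree `γ` is homogeneous of degree `-γ`, and a nonzero homogeneous idempotent has degree `0`, so
`1 - e` is homogeneous.
-/

theorem IsIdempotentElem.units_conj {M : Type*} [Monoid M] {e : M} (he : IsIdempotentElem e)
    (u : Mˣ) : IsIdempotentElem (u * e * ↑u⁻¹) := by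
  calc ↑u * e * ↑u⁻¹ * (↑u * e * ↑u⁻¹) = ↑u * (e * e) * ↑u⁻¹ := by
        simp only [mul_assoc, Units.inv_mul_cancel_left]
    _ = ↑u * e * ↑u⁻¹ := by rw [he.eq]

section Exchange

variable {R : Type*} [Ring R]

theorem exists_mul_eq_of_sub_eq_mul {f x t : R} (h : f - x = (x - x * x) * t) :
    (∃ r, f = x * r) ∧ ∃ s, 1 - f = (1 - x) * s := by
  refine ⟨⟨1 + (1 - x) * t, ?_⟩, ⟨1 - x * t, ?_⟩⟩
  · calc f = x + (f - x) := by abel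
      _ = x * (1 + (1 - x) * t) := by rw [h]; noncomm_ring
  · calc 1 - f = 1 - x - (f - x) := by abel
      _ = (1 - x) * (1 - x * t) := by rw [h]; noncomm_ring

theorem IsIdempotentElem.units_conj_one_sub_sub_add {e : R} (he : IsIdempotentElem e) (u : Rˣ) :
    u * (1 - e) * ↑u⁻¹ - (e + u) = ((e + u) - (e + u) * (e + u)) * ↑u⁻¹ := by
  have hee (t : R) : e * (e * t) = e * t := by rw [← mul_assoc, he.eq]
  simp only [mul_sub, sub_mul, mul_add, add_mul, mul_one, Units.mul_inv, mul_assoc, hee]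
  abel

end Exchange

section Graded

variable {ι R σ : Type*} [DecidableEq ι]

theorem Units.inv_mem_graded_neg [AddGroup ι] [Semiring R] [SetLike σ R] [AddSubmonoidClass σ R]
    (𝒜 : ι → σ) [GradedRing 𝒜] {u : Rˣ} {γ : ι} (hu : (u : R) ∈ 𝒜 γ) :
    ((u⁻¹ : Rˣ) : R) ∈ 𝒜 (-γ) := by
  set w : R := (DirectSum.decompose 𝒜 (↑u⁻¹ : R) (-γ) : R)
  have huw : (u : R) * w = 1 := by
    have h := DirectSum.coe_decompose_mul_add_of_left_mem 𝒜 (b := ↑u⁻¹) hu (j := -γ)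
    rw [Units.mul_inv, add_neg_cancel,
      DirectSum.decompose_of_mem_same 𝒜 (SetLike.one_mem_graded 𝒜)] at h
    exact h.symm
  have hw : ((u⁻¹ : Rˣ) : R) = w := by
    rw [← one_mul w, ← Units.inv_mul u, mul_assoc, huw, mul_one]
  exact hw ▸ SetLike.coe_mem _

theorem IsIdempotentElem.degree_eq_zero [AddCancelMonoid ι] [Semiring R] [SetLike σ R]
    [AddSubmonoidClass σ R] (𝒜 : ι → σ) [GradedRing 𝒜] {e : R} {δ : ι}
    (he : IsIdempotentElem e) (heδ : e ∈ 𝒜 δ) (he0 : e ≠ 0) : δ = 0 := by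
  by_contra hδ
  have hsq : e ∈ 𝒜 (δ + δ) := he.eq ▸ SetLike.mul_mem_graded heδ heδ
  have hne : δ + δ ≠ δ := fun h => hδ (add_eq_right.mp h)
  apply he0
  rw [← DirectSum.decompose_of_mem_same 𝒜 heδ, DirectSum.decompose_of_mem_ne 𝒜 hsq hne]

theorem IsIdempotentElem.isHomogeneousElem_one_sub [AddCancelMonoid ι] [Ring R] [SetLike σ R]
    [AddSubgroupClass σ R] (𝒜 : ι → σ) [GradedRing 𝒜] {e : R} (he : IsIdempotentElem e)
    (he𝒜 : SetLike.IsHomogeneousElem 𝒜 e) : SetLike.IsHomogeneousElem 𝒜 (1 - e) := by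
  obtain ⟨δ, heδ⟩ := he𝒜
  by_cases he0 : e = 0
  · exact he0 ▸ (sub_zero (1 : R)).symm ▸ SetLike.isHomogeneousElem_one 𝒜
  · obtain rfl := he.degree_eq_zero 𝒜 heδ he0
    exact ⟨0, sub_mem (SetLike.one_mem_graded 𝒜) heδ⟩

end Graded

/-- A graded clean `Γ`-graded unital ring is graded right exchange. -/
theorem stmt_11 {Γ R : Type*} [AddGroup Γ] [DecidableEq Γ] [Ring R]
    (𝒜 : Γ → AddSubgroup R) [SetLike.GradedMonoid 𝒜] [DirectSum.Decomposition 𝒜]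
    (hclean : ∀ x : R, (∃ γ, x ∈ 𝒜 γ) →
      ∃ u e : R, (∃ γ, u ∈ 𝒜 γ) ∧ IsUnit u ∧ (∃ γ, e ∈ 𝒜 γ) ∧ e * e = e ∧ x = e + u) :
    ∀ x : R, (∃ γ, x ∈ 𝒜 γ) → ∃ f : R, (∃ γ, f ∈ 𝒜 γ) ∧ f * f = f ∧
      (∃ r : R, f = x * r) ∧ (∃ s : R, 1 - f = (1 - x) * s) := by
  have : GradedRing 𝒜 := {}
  intro x hx
  obtain ⟨_, e, ⟨γ, hu⟩, ⟨u, rfl⟩, he𝒜, he, rfl⟩ := hclean x hx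
  replace he : IsIdempotentElem e := he
  have hu𝒜 : SetLike.IsHomogeneousElem 𝒜 (u : R) := ⟨γ, hu⟩
  have hu𝒜' : SetLike.IsHomogeneousElem 𝒜 ((u⁻¹ : Rˣ) : R) := ⟨-γ, u.inv_mem_graded_neg 𝒜 hu⟩
  exact ⟨u * (1 - e) * ↑u⁻¹, (hu𝒜.mul (he.isHomogeneousElem_one_sub 𝒜 he𝒜)).mul hu𝒜',
    (he.one_sub.units_conj u).eq,
    exists_mul_eq_of_sub_eq_mul (he.units_conj_one_sub_sub_add u)⟩
end

section
/- Let R be a Γ-graded unital ring such that R_ε is an exchange ring, and let I be a graded right ideal of R. Then homogeneous idempotents lift modulo I: for every homogeneous x ∈ R with x − x² ∈ I, there exists an idempotent e ∈ R_ε with e − x ∈ I. -/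
/-! A homogeneous `x` of degree `γ ≠ 0` has `x * x` of degree `γ + γ ≠ γ`, so `x` is the
`γ`-component of `x - x * x`; a graded ideal containing `x - x * x` therefore contains `x`,
and `e = 0` lifts it. In degree `0` the exchange property of `𝒜 0` gives an idempotent `f`
with `f - x ∈ (x - x * x) 𝒜 0 ⊆ I`. -/

section GradedRing

variable {ι R : Type*} [AddRightCancelMonoid ι] [DecidableEq ι] [Ring R]
  (𝒜 : ι → AddSubgroup R) [SetLike.GradedMonoid 𝒜] [DirectSum.Decomposition 𝒜]

theorem decompose_sub_mul_self_of_mem_of_ne_zero {x : R} {γ : ι} (hx : x ∈ 𝒜 γ) (hγ : γ ≠ 0) :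
    ((DirectSum.decompose 𝒜 (x - x * x) γ : 𝒜 γ) : R) = x := by
  have hxx : x * x ∈ 𝒜 (γ + γ) := SetLike.mul_mem_graded hx hx
  have hne : γ + γ ≠ γ := fun h => hγ (add_eq_right.mp h)
  rw [DirectSum.decompose_sub, DFinsupp.sub_apply, AddSubgroup.coe_sub,
    DirectSum.decompose_of_mem_same 𝒜 hx, DirectSum.decompose_of_mem_ne 𝒜 hxx hne, sub_zero]

theorem mem_of_sub_mul_self_mem_of_ne_zero {I : AddSubgroup R}
    (hIgr : ∀ a ∈ I, ∀ γ : ι, ((DirectSum.decompose 𝒜 a γ : 𝒜 γ) : R) ∈ I)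
    {x : R} {γ : ι} (hx : x ∈ 𝒜 γ) (hγ : γ ≠ 0) (hxI : x - x * x ∈ I) : x ∈ I :=
  decompose_sub_mul_self_of_mem_of_ne_zero 𝒜 hx hγ ▸ hIgr _ hxI γ

end GradedRing

/-- If `R` is a `Γ`-graded unital ring whose `ε`-component is an exchange ring,
then homogeneous idempotents lift modulo every graded right ideal. -/
theorem stmt_14 {Γ R : Type*} [AddGroup Γ] [DecidableEq Γ] [Ring R]
    (𝒜 : Γ → AddSubgroup R) [SetLike.GradedMonoid 𝒜] [DirectSum.Decomposition 𝒜]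
    (hexch : ∀ a ∈ 𝒜 (0 : Γ), ∃ f ∈ 𝒜 (0 : Γ), f * f = f ∧
      ∃ r ∈ 𝒜 (0 : Γ), f - a = (a - a * a) * r)
    (I : AddSubgroup R)
    (hIr : ∀ a ∈ I, ∀ r : R, a * r ∈ I)
    (hIgr : ∀ a ∈ I, ∀ γ : Γ, ((DirectSum.decompose 𝒜 a γ : 𝒜 γ) : R) ∈ I) :
    ∀ x : R, (∃ γ, x ∈ 𝒜 γ) → x - x * x ∈ I →
      ∃ e ∈ 𝒜 (0 : Γ), e * e = e ∧ e - x ∈ I := by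
  rintro x ⟨γ, hx⟩ hxI
  obtain rfl | hγ := eq_or_ne γ 0
  · obtain ⟨f, hf0, hff, r, -, hfr⟩ := hexch x hx
    exact ⟨f, hf0, hff, hfr ▸ hIr _ hxI r⟩
  · have hxmem : x ∈ I := mem_of_sub_mul_self_mem_of_ne_zero 𝒜 hIgr hx hγ hxI
    exact ⟨0, zero_mem _, mul_zero 0, by simpa using I.neg_mem hxmem⟩
end

section
/- Let K be a field, trivially ℤ-graded, and let S = 𝕄ₙ(K)(γ₁,…,γₙ) with any shifts γ₁,…,γₙ ∈ ℤ. Then S is graded right exchange: for every homogeneous a ∈ S there is a homogeneous idempotent e ∈ S₀ with e ∈ aS and 1 − e ∈ (1 − a)S. -/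
/-!
An element `a` with an inner inverse, `a b a = a`, has the exchange idempotent
`e = a b + a - a² b = a (b + 1 - a b)`, and `1 - e = (1 - a)(1 - a b)`. A homogeneous matrix of
degree `δ` over a field has an inner inverse of degree `-δ`: take the degree `-δ` component of any
inner inverse. For `δ = 0` this makes `e` homogeneous of degree `0`. For `δ ≠ 0`, `aᵏ` has degree
`k δ`, which for some `k` is none of the finitely many differences `γⱼ - γᵢ`; so `a` is nilpotent,
`1 - a` is a unit, and `e = 0` works.
-/

open LinearMap in
theorem LinearMap.exists_comp_comp_eq_self {K V W : Type*} [DivisionRing K] [AddCommGroup V]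
    [Module K V] [AddCommGroup W] [Module K W] (f : V →ₗ[K] W) :
    ∃ g : W →ₗ[K] V, f ∘ₗ g ∘ₗ f = f := by
  obtain ⟨q, hq⟩ := (range f).exists_isCompl
  obtain ⟨s, hs⟩ := f.rangeRestrict.exists_rightInverse_of_surjective (range_rangeRestrict f)
  refine ⟨s ∘ₗ (range f).projectionOnto q hq, ?_⟩
  ext v
  simp only [comp_apply, Submodule.projectionOnto_apply_of_mem_left hq (mem_range_self f v)]
  exact congrArg Subtype.val (LinearMap.congr_fun hs _)

theorem Matrix.exists_mul_mul_eq_self {K m n : Type*} [Field K] [Fintype m] [Fintype n]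
    [DecidableEq m] [DecidableEq n] (a : Matrix m n K) : ∃ b : Matrix n m K, a * b * a = a := by
  obtain ⟨g, hg⟩ := (Matrix.toLin' a).exists_comp_comp_eq_self
  refine ⟨Matrix.toLin'.symm g, Matrix.toLin'.injective ?_⟩
  rwa [Matrix.toLin'_mul, Matrix.toLin'_mul, LinearEquiv.apply_symm_apply]

theorem isIdempotentElem_of_mul_mul_eq_self {R : Type*} [Ring R] {a b : R} (h : a * b * a = a) :
    IsIdempotentElem (a * b + a - a * (a * b)) := by
  have hba : a * (b * a) = a := by rw [← mul_assoc, h]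
  have hbax : ∀ x, a * (b * (a * x)) = a * x := fun x => by
    rw [← mul_assoc b, ← mul_assoc, hba]
  unfold IsIdempotentElem
  simp only [sub_mul, mul_sub, add_mul, mul_add, mul_assoc, hba, hbax]
  abel

namespace Matrix

variable {ι G K : Type*} [AddCommGroup G]

/-- `a` lies in the degree-`δ` part of `𝕄ₙ(K)(γ₁,…,γₙ)`. -/
def IsHomogeneous [Zero K] (γ : ι → G) (δ : G) (a : Matrix ι ι K) : Prop :=
  ∀ i j, γ j - γ i ≠ δ → a i j = 0

def homogeneousComponent [Zero K] [DecidableEq G] (γ : ι → G) (δ : G) (a : Matrix ι ι K) :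
    Matrix ι ι K :=
  of fun i j => if γ j - γ i = δ then a i j else 0

variable {γ : ι → G}

section

variable [DecidableEq G]

@[simp]
theorem homogeneousComponent_apply [Zero K] (δ : G) (a : Matrix ι ι K) (i j : ι) :
    homogeneousComponent γ δ a i j = if γ j - γ i = δ then a i j else 0 :=
  rfl

theorem isHomogeneous_homogeneousComponent [Zero K] (δ : G) (a : Matrix ι ι K) :
    IsHomogeneous γ δ (homogeneousComponent γ δ a) := fun _ _ h => if_neg h

theorem IsHomogeneous.homogeneousComponent_eq [Zero K] {δ : G} {a : Matrix ι ι K}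
    (ha : IsHomogeneous γ δ a) : homogeneousComponent γ δ a = a := by
  ext i j
  by_cases h : γ j - γ i = δ
  · exact if_pos h
  · rw [homogeneousComponent_apply, if_neg h, ha i j h]

variable [Fintype ι] [NonUnitalNonAssocSemiring K]

theorem IsHomogeneous.homogeneousComponent_mul_left {δ : G} {x : Matrix ι ι K}
    (hx : IsHomogeneous γ δ x) (d : G) (c : Matrix ι ι K) :
    homogeneousComponent γ (δ + d) (x * c) = x * homogeneousComponent γ d c := by
  ext i j
  simp only [homogeneousComponent_apply, mul_apply, Finset.ite_sum_zero, mul_ite, mul_zero]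
  refine Finset.sum_congr rfl fun k _ => ?_
  by_cases hk : γ k - γ i = δ
  · have : γ j - γ i = δ + d ↔ γ j - γ k = d := by
      rw [← sub_add_sub_cancel _ (γ k), hk, add_comm, add_right_inj]
    simp only [this]
  · simp [hx i k hk]

theorem IsHomogeneous.homogeneousComponent_mul_right {ε : G} {y : Matrix ι ι K}
    (hy : IsHomogeneous γ ε y) (d : G) (c : Matrix ι ι K) :
    homogeneousComponent γ (d + ε) (c * y) = homogeneousComponent γ d c * y := by
  ext i j
  simp only [homogeneousComponent_apply, mul_apply, Finset.ite_sum_zero, ite_mul, zero_mul]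
  refine Finset.sum_congr rfl fun k _ => ?_
  by_cases hk : γ j - γ k = ε
  · have : γ j - γ i = d + ε ↔ γ k - γ i = d := by
      rw [← sub_add_sub_cancel _ (γ k), hk, add_comm, add_left_inj]
    simp only [this]
  · simp [hy k j hk]

end

theorem IsHomogeneous.mul [Fintype ι] [NonUnitalNonAssocSemiring K] {δ ε : G}
    {x y : Matrix ι ι K} (hx : IsHomogeneous γ δ x) (hy : IsHomogeneous γ ε y) :
    IsHomogeneous γ (δ + ε) (x * y) := by
  classical
  rw [← hy.homogeneousComponent_eq, ← hx.homogeneousComponent_mul_left]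
  exact isHomogeneous_homogeneousComponent _ _

theorem IsHomogeneous.add [AddZeroClass K] {δ : G} {x y : Matrix ι ι K}
    (hx : IsHomogeneous γ δ x) (hy : IsHomogeneous γ δ y) : IsHomogeneous γ δ (x + y) :=
  fun i j h => by rw [add_apply, hx i j h, hy i j h, add_zero]

theorem IsHomogeneous.sub [SubtractionMonoid K] {δ : G} {x y : Matrix ι ι K}
    (hx : IsHomogeneous γ δ x) (hy : IsHomogeneous γ δ y) : IsHomogeneous γ δ (x - y) :=
  fun i j h => by rw [sub_apply, hx i j h, hy i j h, sub_zero]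

theorem isHomogeneous_one [DecidableEq ι] [Zero K] [One K] :
    IsHomogeneous γ 0 (1 : Matrix ι ι K) := fun i j h =>
  one_apply_ne fun hij => h (by rw [hij, sub_self])

theorem IsHomogeneous.pow [Fintype ι] [DecidableEq ι] [Semiring K] {δ : G} {a : Matrix ι ι K}
    (ha : IsHomogeneous γ δ a) (k : ℕ) : IsHomogeneous γ (k • δ) (a ^ k) := by
  induction k with
  | zero => simpa using isHomogeneous_one
  | succ k ih => simpa [pow_succ, succ_nsmul] using ih.mul ha

theorem IsHomogeneous.isNilpotent [Fintype ι] [DecidableEq ι] [Semiring K] [IsAddTorsionFree G]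
    {δ : G} {a : Matrix ι ι K} (ha : IsHomogeneous γ δ a) (hδ : δ ≠ 0) : IsNilpotent a := by
  have hinj : Function.Injective (· • δ : ℕ → G) :=
    injective_nsmul_iff_not_isOfFinAddOrder.mpr (not_isOfFinAddOrder_of_isAddTorsionFree hδ)
  obtain ⟨k, hk⟩ :=
    ((Set.finite_range fun p : ι × ι => γ p.2 - γ p.1).preimage hinj.injOn).exists_notMem
  exact ⟨k, ext fun i j => (ha.pow k) i j fun h => hk ⟨(i, j), h⟩⟩

theorem IsHomogeneous.exists_mul_mul_eq_self [Fintype ι] [DecidableEq ι] [Field K] {δ : G}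
    {a : Matrix ι ι K} (ha : IsHomogeneous γ δ a) :
    ∃ b, IsHomogeneous γ (-δ) b ∧ a * b * a = a := by
  classical
  obtain ⟨b, hb⟩ := a.exists_mul_mul_eq_self
  refine ⟨homogeneousComponent γ (-δ) b, isHomogeneous_homogeneousComponent _ _, ?_⟩
  calc a * homogeneousComponent γ (-δ) b * a
      = homogeneousComponent γ (δ + -δ + δ) (a * b * a) := by
        rw [ha.homogeneousComponent_mul_right, ha.homogeneousComponent_mul_left]
    _ = a := by rw [add_neg_cancel, zero_add, hb, ha.homogeneousComponent_eq]

end Matrix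

/-- The graded matrix ring `S = 𝕄ₙ(K)(γ₁,…,γₙ)` over a trivially graded field
is graded right exchange: for every degree `δ` and `a ∈ S_δ` there is an
idempotent `e ∈ S₀` with `e ∈ aS` and `1 - e ∈ (1 - a)S`. -/
theorem stmt_16 (K : Type*) [Field K] (n : ℕ) (γ : Fin n → ℤ)
    (δ : ℤ) (a : Matrix (Fin n) (Fin n) K)
    (ha : ∀ i j : Fin n, γ j - γ i ≠ δ → a i j = 0) :
    ∃ e : Matrix (Fin n) (Fin n) K,
      (∀ i j : Fin n, γ j - γ i ≠ 0 → e i j = 0) ∧ e * e = e ∧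
      (∃ r : Matrix (Fin n) (Fin n) K, e = a * r) ∧
      (∃ s : Matrix (Fin n) (Fin n) K, 1 - e = (1 - a) * s) := by
  change Matrix.IsHomogeneous γ δ a at ha
  obtain rfl | hδ := eq_or_ne δ 0
  · obtain ⟨b, hb, hab⟩ := ha.exists_mul_mul_eq_self
    rw [neg_zero] at hb
    have he : Matrix.IsHomogeneous γ 0 (a * b + a - a * (a * b)) := by
      simpa using ((ha.mul hb).add ha).sub (ha.mul (ha.mul hb))
    exact ⟨_, he, isIdempotentElem_of_mul_mul_eq_self hab, ⟨b + 1 - a * b, by noncomm_ring⟩,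
      ⟨1 - a * b, by noncomm_ring⟩⟩
  · have hu := (ha.isNilpotent hδ).isUnit_one_sub
    exact ⟨0, fun _ _ _ => rfl, mul_zero 0, ⟨0, by simp⟩, 
      ⟨↑hu.unit⁻¹, by rw [sub_zero, hu.mul_val_inv]⟩⟩
end

section
/- Let E be a graph with finitely many vertices and K a field, and suppose the unital Leavitt path algebra L_K(E) (ℤ-graded as usual) is graded unit-regular: for every homogeneous x there is a homogeneous unit u with xux = x. Then E is row-finite: no vertex emits infinitely many edges. -/
/-! Leavitt path algebra of a directed graph, defined as a `RingQuot` of the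
free algebra on vertices, edges and ghost edges. -/

structure LPAGraph where
  V : Type
  E : Type
  s : E → V
  r : E → V

namespace LPAGraph

inductive Gen (G : LPAGraph)
  | vert : G.V → Gen G
  | edge : G.E → Gen G
  | ghost : G.E → Gen G

variable (K : Type) [Field K] (G : LPAGraph)

open FreeAlgebra in
/-- The Leavitt path algebra relations. -/
inductive Rel : FreeAlgebra K (Gen G) → FreeAlgebra K (Gen G) → Prop
  | vv {u w : G.V} (h : u ≠ w) :
      Rel (ι K (Gen.vert u) * ι K (Gen.vert w)) 0
  | v_idem (u : G.V) :
      Rel (ι K (Gen.vert u) * ι K (Gen.vert u)) (ι K (Gen.vert u))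
  | se (e : G.E) : Rel (ι K (Gen.vert (G.s e)) * ι K (Gen.edge e)) (ι K (Gen.edge e))
  | er (e : G.E) : Rel (ι K (Gen.edge e) * ι K (Gen.vert (G.r e))) (ι K (Gen.edge e))
  | rg (e : G.E) : Rel (ι K (Gen.vert (G.r e)) * ι K (Gen.ghost e)) (ι K (Gen.ghost e))
  | gs (e : G.E) : Rel (ι K (Gen.ghost e) * ι K (Gen.vert (G.s e))) (ι K (Gen.ghost e))
  | ck1_ne {e f : G.E} (h : e ≠ f) :
      Rel (ι K (Gen.ghost e) * ι K (Gen.edge f)) 0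
  | ck1 (e : G.E) :
      Rel (ι K (Gen.ghost e) * ι K (Gen.edge e)) (ι K (Gen.vert (G.r e)))
  | ck2 (v : G.V) (hfin : {e : G.E | G.s e = v}.Finite)
      (hne : {e : G.E | G.s e = v}.Nonempty) :
      Rel (ι K (Gen.vert v))
        (hfin.toFinset.sum fun e => ι K (Gen.edge e) * ι K (Gen.ghost e))

/-- The Leavitt path algebra (inside its canonical unital envelope). -/
abbrev L := RingQuot (Rel K G)

/-- The image of a vertex in the Leavitt path algebra. -/
def vert (v : G.V) : L K G := RingQuot.mkRingHom (Rel K G) (FreeAlgebra.ι K (Gen.vert v))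

/-- The image of an edge. -/
def edge (e : G.E) : L K G := RingQuot.mkRingHom (Rel K G) (FreeAlgebra.ι K (Gen.edge e))

/-- The image of a ghost edge `e*`. -/
def ghost (e : G.E) : L K G := RingQuot.mkRingHom (Rel K G) (FreeAlgebra.ι K (Gen.ghost e))

/-- The product `e₁⋯eₙ` associated with a list of edges. -/
def pathProd (p : List G.E) : L K G := (p.map (edge K G)).prod

/-- The product `eₙ*⋯e₁*` associated with a list of edges. -/
def starProd (p : List G.E) : L K G := (p.reverse.map (ghost K G)).prod

/-- The list of edges forms a path. -/
def IsPath (p : List G.E) : Prop := p.Chain' fun e f => G.r e = G.s f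

/-- Monomials `p q*` of degree `n = |p| - |q|` (with `r(p) = r(q) = v`). -/
def monoSet (n : ℤ) : Set (L K G) :=
  { x | ∃ (p q : List G.E) (v : G.V), IsPath G p ∧ IsPath G q ∧
      (∀ e : G.E, p.getLast? = some e → G.r e = v) ∧
      (∀ e : G.E, q.getLast? = some e → G.r e = v) ∧
      (p.length : ℤ) - q.length = n ∧
      x = pathProd K G p * vert K G v * starProd K G q }

/-- The degree-`n` homogeneous component of the Leavitt path algebra. -/
def component (n : ℤ) : Submodule K (L K G) := Submodule.span K (monoSet K G n)

/-- The Leavitt path algebra as a subspace of its unital envelope: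
the span of all monomials `p q*`. -/
def lpa : Submodule K (L K G) := Submodule.span K (⋃ n : ℤ, monoSet K G n)

end LPAGraph

/-!
If `w` is the inverse of a unit `u` of degree `-1`, its degree-one component `w₁`, read off
through the coaction `L → L[t, t⁻¹]`, `e ↦ e t`, `e* ↦ e* t⁻¹`, still satisfies `w₁ u = 1`.
An element of degree one is a combination of finitely many monomials `e p q*`, so `f* w₁ = 0`
for all but finitely many edges `f`, and for those `f* = f* w₁ u = 0`. This is impossible:
`f* f = r(f)`, and every vertex acts nontrivially on the space spanned by boundary paths.
-/

section PartialOp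

variable (R : Type*) {α : Type*} [CommSemiring R]

noncomputable def partialOp (σ : α → Option α) : Module.End R (α →₀ R) :=
  Finsupp.lift (α →₀ R) R α fun a => (σ a).elim 0 fun b => Finsupp.single b 1

variable {R}

lemma partialOp_single (σ : α → Option α) (a : α) (c : R) :
    partialOp R σ (Finsupp.single a c) = (σ a).elim 0 fun b => Finsupp.single b c := by
  cases h : σ a <;> simp [partialOp, h]

lemma partialOp_mul (σ τ : α → Option α) :
    partialOp R σ * partialOp R τ = partialOp R fun a => (τ a).bind σ := by
  refine Finsupp.lhom_ext fun a c => ?_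
  rw [Module.End.mul_apply, partialOp_single, partialOp_single]
  cases τ a <;> simp [partialOp_single]

lemma partialOp_none : partialOp R (fun _ : α => none) = 0 :=
  Finsupp.lhom_ext fun a c => by simp [partialOp_single]

open scoped Classical in
lemma sum_partialOp_eq {ι : Type*} (f : α → Option ι) (s : Finset ι) :
    ∑ i ∈ s, partialOp R (fun a => if f a = some i then some a else none) =
      partialOp R fun a => if ∃ i ∈ s, f a = some i then some a else none := by
  refine Finsupp.lhom_ext fun a c => ?_
  rw [LinearMap.sum_apply]
  simp only [partialOp_single]
  cases f a with
  | none => simp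
  | some i =>
    simp only [Option.some.injEq, exists_eq_right',
      apply_ite (Option.elim · (0 : α →₀ R) fun b => Finsupp.single b c), Option.elim_some,
      Option.elim_none, Finset.sum_ite_eq]

end PartialOp

namespace LPAGraph

structure IsLeavittFamily (G : LPAGraph) {A : Type*} [Semiring A] (P : G.V → A) (S T : G.E → A) :
    Prop where
  vert_mul_vert_ne {u w : G.V} : u ≠ w → P u * P w = 0
  vert_mul_vert_self (u : G.V) : P u * P u = P u
  vert_mul_edge (e : G.E) : P (G.s e) * S e = S e
  edge_mul_vert (e : G.E) : S e * P (G.r e) = S e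
  vert_mul_ghost (e : G.E) : P (G.r e) * T e = T e
  ghost_mul_vert (e : G.E) : T e * P (G.s e) = T e
  ghost_mul_edge_ne {e f : G.E} : e ≠ f → T e * S f = 0
  ghost_mul_edge (e : G.E) : T e * S e = P (G.r e)
  vert_eq_sum (v : G.V) (hfin : {e : G.E | G.s e = v}.Finite) :
    {e : G.E | G.s e = v}.Nonempty → P v = ∑ e ∈ hfin.toFinset, S e * T e

variable {K : Type} [Field K] {G : LPAGraph}

section Lift

variable {A : Type*} [Semiring A] [Algebra K A] {P : G.V → A} {S T : G.E → A}

def Gen.elim (P : G.V → A) (S T : G.E → A) : Gen G → A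
  | .vert v => P v
  | .edge e => S e
  | .ghost e => T e

variable (K) in
noncomputable def IsLeavittFamily.lift (hF : IsLeavittFamily G P S T) : L K G →ₐ[K] A :=
  RingQuot.liftAlgHom K ⟨FreeAlgebra.lift K (Gen.elim P S T), fun x y h => by
    cases h <;> simp [Gen.elim, hF.vert_mul_vert_ne, hF.vert_mul_vert_self, hF.vert_mul_edge,
      hF.edge_mul_vert, hF.vert_mul_ghost, hF.ghost_mul_vert, hF.ghost_mul_edge_ne,
      hF.ghost_mul_edge, ← hF.vert_eq_sum, *]⟩

lemma IsLeavittFamily.lift_mk (hF : IsLeavittFamily G P S T) (g : Gen G) :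
    hF.lift K (RingQuot.mkRingHom (Rel K G) (FreeAlgebra.ι K g)) = Gen.elim P S T g := by
  rw [← RingQuot.mkAlgHom_coe K, AlgHom.coe_toRingHom, IsLeavittFamily.lift,
    RingQuot.liftAlgHom_mkAlgHom_apply, FreeAlgebra.lift_ι_apply]

lemma IsLeavittFamily.lift_vert (hF : IsLeavittFamily G P S T) (v : G.V) :
    hF.lift K (vert K G v) = P v :=
  hF.lift_mk (.vert v)

lemma IsLeavittFamily.lift_edge (hF : IsLeavittFamily G P S T) (e : G.E) :
    hF.lift K (edge K G e) = S e :=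
  hF.lift_mk (.edge e)

lemma IsLeavittFamily.lift_ghost (hF : IsLeavittFamily G P S T) (e : G.E) :
    hF.lift K (ghost K G e) = T e :=
  hF.lift_mk (.ghost e)

end Lift

variable (K G) in
theorem isLeavittFamily : IsLeavittFamily G (vert K G) (edge K G) (ghost K G) where
  vert_mul_vert_ne h := by rw [vert, vert, ← map_mul, RingQuot.mkRingHom_rel (Rel.vv h), map_zero]
  vert_mul_vert_self u := by rw [vert, ← map_mul, RingQuot.mkRingHom_rel (Rel.v_idem u)]
  vert_mul_edge e := by rw [vert, edge, ← map_mul, RingQuot.mkRingHom_rel (Rel.se e)]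
  edge_mul_vert e := by rw [vert, edge, ← map_mul, RingQuot.mkRingHom_rel (Rel.er e)]
  vert_mul_ghost e := by rw [vert, ghost, ← map_mul, RingQuot.mkRingHom_rel (Rel.rg e)]
  ghost_mul_vert e := by rw [vert, ghost, ← map_mul, RingQuot.mkRingHom_rel (Rel.gs e)]
  ghost_mul_edge_ne h := by
    rw [edge, ghost, ← map_mul, RingQuot.mkRingHom_rel (Rel.ck1_ne h), map_zero]
  ghost_mul_edge e := by rw [vert, edge, ghost, ← map_mul, RingQuot.mkRingHom_rel (Rel.ck1 e)]
  vert_eq_sum v hfin hne := by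
    simp only [vert, edge, ghost, ← map_mul, ← map_sum]
    exact RingQuot.mkRingHom_rel (Rel.ck2 v hfin hne)

section Grading

open AddMonoidAlgebra

theorem IsLeavittFamily.laurent {A : Type*} [Semiring A] {P : G.V → A} {S T : G.E → A}
    (hF : IsLeavittFamily G P S T) :
    IsLeavittFamily G (fun v => single (0 : ℤ) (P v)) (fun e => single 1 (S e))
      (fun e => single (-1) (T e)) where
  vert_mul_vert_ne h := by rw [single_mul_single, hF.vert_mul_vert_ne h, single_zero]
  vert_mul_vert_self u := by rw [single_mul_single, hF.vert_mul_vert_self u, add_zero]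
  vert_mul_edge e := by rw [single_mul_single, hF.vert_mul_edge e, zero_add]
  edge_mul_vert e := by rw [single_mul_single, hF.edge_mul_vert e, add_zero]
  vert_mul_ghost e := by rw [single_mul_single, hF.vert_mul_ghost e, zero_add]
  ghost_mul_vert e := by rw [single_mul_single, hF.ghost_mul_vert e, add_zero]
  ghost_mul_edge_ne h := by rw [single_mul_single, hF.ghost_mul_edge_ne h, single_zero]
  ghost_mul_edge e := by rw [single_mul_single, hF.ghost_mul_edge e, neg_add_cancel]
  vert_eq_sum v hfin hne := by
    simp only [single_mul_single, add_neg_cancel, hF.vert_eq_sum v hfin hne]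
    exact map_sum (singleAddHom 0) _ _

variable (K G) in
noncomputable def grading : L K G →ₐ[K] AddMonoidAlgebra (L K G) ℤ :=
  (isLeavittFamily K G).laurent.lift K

lemma grading_pathProd (p : List G.E) :
    grading K G (pathProd K G p) = single (p.length : ℤ) (pathProd K G p) := by
  induction p with
  | nil => rw [pathProd, List.map_nil, List.prod_nil, map_one, one_def]; rfl
  | cons e p ih =>
    rw [pathProd, List.map_cons, List.prod_cons, map_mul, ← pathProd, ih, grading,
      IsLeavittFamily.lift_edge, single_mul_single, List.length_cons]
    push_cast
    rw [add_comm]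

lemma grading_starProd (q : List G.E) :
    grading K G (starProd K G q) = single (-(q.length : ℤ)) (starProd K G q) := by
  induction q with
  | nil => rw [starProd, List.reverse_nil, List.map_nil, List.prod_nil, map_one, one_def]; rfl
  | cons e q ih =>
    rw [starProd, List.reverse_cons, List.map_append, List.prod_append, map_mul, ← starProd, ih,
      List.map_singleton, List.prod_singleton, grading, IsLeavittFamily.lift_ghost,
      single_mul_single, List.length_cons]
    push_cast
    rw [neg_add]

lemma grading_of_mem_monoSet {n : ℤ} {x : L K G} (hx : x ∈ monoSet K G n) :
    grading K G x = single n x := by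
  obtain ⟨p, q, v, -, -, -, -, rfl, rfl⟩ := hx
  rw [map_mul, map_mul, grading_pathProd, grading_starProd, grading, IsLeavittFamily.lift_vert,
    single_mul_single, single_mul_single, add_zero, ← sub_eq_add_neg]

lemma grading_of_mem_component {n : ℤ} {x : L K G} (hx : x ∈ component K G n) :
    grading K G x = single n x := by
  induction hx using Submodule.span_induction with
  | mem x hx => exact grading_of_mem_monoSet hx
  | zero => simp
  | add x y _ _ hx hy => rw [map_add, hx, hy, single_add]
  | smul c x _ hx => rw [map_smul, hx, smul_single]

lemma coeff_grading_mem_component {x : L K G} (hx : x ∈ lpa K G) (n : ℤ) :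
    (grading K G x).coeff n ∈ component K G n := by
  induction hx using Submodule.span_induction with
  | mem x hx =>
    obtain ⟨_, ⟨m, rfl⟩, hx⟩ := hx
    rw [grading_of_mem_monoSet hx, coeff_single, Finsupp.single_apply]
    split_ifs with h
    · exact h ▸ Submodule.subset_span hx
    · exact Submodule.zero_mem _
  | zero => simp
  | add x y _ _ hx hy => rw [map_add, coeff_add, Finsupp.add_apply]; exact add_mem hx hy
  | smul c x _ hx => rw [map_smul, coeff_smul, Finsupp.smul_apply]; exact Submodule.smul_mem _ c hx

lemma coeff_grading_mul_eq {m n : ℤ} {w u c : L K G} (hu : u ∈ component K G n)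
    (hc : c ∈ component K G m) (h : w * u = c) : (grading K G w).coeff (m - n) * u = c := by
  have := congr_arg (fun x => (grading K G x).coeff m) h
  simp only [map_mul, grading_of_mem_component hu, grading_of_mem_component hc,
    coeff_mul_single_apply, coeff_single, Finsupp.single_eq_same] at this
  rwa [sub_eq_add_neg]

end Grading

variable (G) in
def IsRegular (v : G.V) : Prop :=
  {e : G.E | G.s e = v}.Finite ∧ {e : G.E | G.s e = v}.Nonempty

variable (G) in
def IsPathFrom : G.V → List G.E → Prop
  | _, [] => True
  | v, e :: p => G.s e = v ∧ IsPathFrom (G.r e) p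

variable (G) in
def pathEnd : G.V → List G.E → G.V
  | v, [] => v
  | _, e :: p => pathEnd (G.r e) p

@[ext]
structure InfinitePath (G : LPAGraph) where
  edge : ℕ → G.E
  r_eq_s (n : ℕ) : G.r (edge n) = G.s (edge (n + 1))

namespace InfinitePath

def cons (e : G.E) (γ : InfinitePath G) (h : G.r e = G.s (γ.edge 0)) : InfinitePath G where
  edge
    | 0 => e
    | n + 1 => γ.edge n
  r_eq_s
    | 0 => h
    | n + 1 => γ.r_eq_s n

def tail (γ : InfinitePath G) : InfinitePath G where
  edge n := γ.edge (n + 1)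
  r_eq_s n := γ.r_eq_s (n + 1)

lemma cons_tail (γ : InfinitePath G) : γ.tail.cons (γ.edge 0) (γ.r_eq_s 0) = γ := by
  ext (_ | _) <;> rfl

lemma exists_of_forall_exists_edge {S : Set G.V} (hS : ∀ v ∈ S, ∃ e, G.s e = v ∧ G.r e ∈ S)
    {x : G.V} (hx : x ∈ S) : ∃ γ : InfinitePath G, G.s (γ.edge 0) = x := by
  choose next hnext using fun v : S => hS v v.2
  let vertex (n : ℕ) : S := (fun v => ⟨G.r (next v), (hnext v).2⟩)^[n] ⟨x, hx⟩
  refine ⟨⟨fun n => next (vertex n), fun n => ?_⟩, (hnext _).1⟩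
  rw [(hnext _).1]
  simp only [vertex, Function.iterate_succ_apply']

end InfinitePath

/-- The vertex of a finite boundary path is recorded so that paths of length zero make sense. -/
inductive BoundaryPath (G : LPAGraph) : Type
  | fin (v : G.V) (p : List G.E) (hp : IsPathFrom G v p) (hv : ¬ IsRegular G (pathEnd G v p))
  | inf (γ : InfinitePath G)

namespace BoundaryPath

def src : BoundaryPath G → G.V
  | fin v .. => v
  | inf γ => G.s (γ.edge 0)

def cons (e : G.E) : (x : BoundaryPath G) → G.r e = x.src → BoundaryPath G
  | fin v p hp hv, h =>
    have h : G.r e = v := h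
    fin (G.s e) (e :: p) ⟨rfl, h ▸ hp⟩ (h ▸ hv : ¬ IsRegular G (pathEnd G (G.r e) p))
  | inf γ, h => inf (γ.cons e h)

def uncons : BoundaryPath G → Option (G.E × BoundaryPath G)
  | fin _ [] _ _ => none
  | fin _ (e :: p) hp hv => some (e, fin (G.r e) p hp.2 hv)
  | inf γ => some (γ.edge 0, inf γ.tail)

lemma src_cons (e : G.E) (x : BoundaryPath G) (h : G.r e = x.src) : (x.cons e h).src = G.s e := by
  cases x <;> rfl

lemma uncons_cons (e : G.E) (x : BoundaryPath G) (h : G.r e = x.src) :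
    (x.cons e h).uncons = some (e, x) := by
  cases x with
  | fin v p hp hv =>
    obtain rfl : G.r e = v := h
    rfl
  | inf γ => rfl

lemma exists_cons_eq_of_uncons_eq_some {x y : BoundaryPath G} {e : G.E}
    (hx : x.uncons = some (e, y)) : ∃ h : G.r e = y.src, y.cons e h = x := by
  match x, hx with
  | fin v (f :: p) hp hv, hx =>
    cases hx
    refine ⟨rfl, ?_⟩
    obtain rfl : G.s e = v := hp.1
    rfl
  | inf γ, hx =>
    cases hx
    exact ⟨γ.r_eq_s 0, congrArg inf γ.cons_tail⟩

lemma s_eq_src_of_uncons_eq_some {x y : BoundaryPath G} {e : G.E}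
    (hx : x.uncons = some (e, y)) : G.s e = x.src := by
  obtain ⟨h, rfl⟩ := exists_cons_eq_of_uncons_eq_some hx
  exact (src_cons e y h).symm

lemma not_isRegular_of_uncons_eq_none {x : BoundaryPath G} (hx : x.uncons = none) :
    ¬ IsRegular G x.src := by
  match x, hx with
  | fin _ [] _ hv, _ => exact hv

/-- Starting at a vertex, either some path runs into a sink or an infinite emitter, or one can
keep walking forever. -/
lemma exists_src_eq (x : G.V) : ∃ y : BoundaryPath G, y.src = x := by
  by_cases h : ∃ p, ∃ hp : IsPathFrom G x p, ¬ IsRegular G (pathEnd G x p)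
  · obtain ⟨p, hp, hv⟩ := h
    exact ⟨fin x p hp hv, rfl⟩
  · push Not at h
    let S : Set G.V := {v | ∀ p, IsPathFrom G v p → IsRegular G (pathEnd G v p)}
    have hS : ∀ v ∈ S, ∃ e, G.s e = v ∧ G.r e ∈ S := fun v hv => by
      obtain ⟨e, he⟩ := (hv [] trivial).2
      exact ⟨e, he, fun p hp => hv (e :: p) ⟨he, hp⟩⟩
    obtain ⟨γ, hγ⟩ := InfinitePath.exists_of_forall_exists_edge hS h
    exact ⟨inf γ, hγ⟩

open scoped Classical

def head (x : BoundaryPath G) : Option G.E := x.uncons.map Prod.fst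

lemma src_eq_iff_of_isRegular {v : G.V} (hv : IsRegular G v) (x : BoundaryPath G) :
    x.src = v ↔ ∃ e, G.s e = v ∧ x.head = some e := by
  cases hx : x.uncons with
  | none =>
    simp only [head, hx, Option.map_none, reduceCtorEq, and_false, exists_false, iff_false]
    rintro rfl
    exact not_isRegular_of_uncons_eq_none hx hv
  | some y =>
    simp [head, hx, s_eq_src_of_uncons_eq_some hx, eq_comm]

noncomputable def restrictSrc (v : G.V) (x : BoundaryPath G) : Option (BoundaryPath G) :=
  if x.src = v then some x else none

noncomputable def consEdge (e : G.E) (x : BoundaryPath G) : Option (BoundaryPath G) :=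
  if h : G.r e = x.src then some (x.cons e h) else none

noncomputable def removeEdge (e : G.E) (x : BoundaryPath G) : Option (BoundaryPath G) :=
  x.uncons.bind fun y => if y.1 = e then some y.2 else none

lemma bind_removeEdge_consEdge (e : G.E) (x : BoundaryPath G) :
    (removeEdge e x).bind (consEdge e) = if x.head = some e then some x else none := by
  cases hx : x.uncons with
  | none => simp [removeEdge, head, hx]
  | some y =>
    obtain ⟨f, y⟩ := y
    obtain ⟨h, rfl⟩ := exists_cons_eq_of_uncons_eq_some hx
    by_cases hf : f = e
    · subst hf
      simp [removeEdge, consEdge, head, hx, h]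
    · simp [removeEdge, head, hx, hf]

variable (K G) in
theorem isLeavittFamily_partialOp : IsLeavittFamily G (fun v => partialOp K (restrictSrc v))
    (fun e => partialOp K (consEdge e)) (fun e => partialOp K (removeEdge e)) where
  vert_mul_vert_ne h := by
    rw [partialOp_mul, ← partialOp_none]
    congr 1
    funext x
    simp only [restrictSrc]
    split_ifs <;> simp_all [restrictSrc, eq_comm]
  vert_mul_vert_self u := by
    rw [partialOp_mul]
    congr 1
    funext x
    simp only [restrictSrc]
    split_ifs <;> simp_all [restrictSrc]
  vert_mul_edge e := by
    rw [partialOp_mul]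
    congr 1
    funext x
    simp only [restrictSrc, consEdge]
    split_ifs <;> simp_all [restrictSrc, src_cons]
  edge_mul_vert e := by
    rw [partialOp_mul]
    congr 1
    funext x
    simp only [restrictSrc, consEdge]
    split_ifs <;> simp_all [consEdge, eq_comm]
  vert_mul_ghost e := by
    rw [partialOp_mul]
    congr 1
    funext x
    cases hx : x.uncons with
    | none => simp [removeEdge, hx]
    | some y =>
      obtain ⟨f, y⟩ := y
      obtain ⟨h, rfl⟩ := exists_cons_eq_of_uncons_eq_some hx
      by_cases hf : f = e
      · subst hf
        simp [removeEdge, restrictSrc, hx, h]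
      · simp [removeEdge, hx, hf]
  ghost_mul_vert e := by
    rw [partialOp_mul]
    congr 1
    funext x
    cases hx : x.uncons with
    | none => simp [removeEdge, restrictSrc, hx]
    | some y =>
      obtain ⟨f, y⟩ := y
      have hf := s_eq_src_of_uncons_eq_some hx
      by_cases hfe : f = e
      · subst hfe
        simp [removeEdge, restrictSrc, hx, hf]
      · simp [removeEdge, restrictSrc, hx, hfe]
  ghost_mul_edge_ne h := by
    rw [partialOp_mul, ← partialOp_none]
    congr 1
    funext x
    simp only [consEdge, removeEdge]
    split_ifs <;> simp_all [removeEdge, uncons_cons, eq_comm]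
  ghost_mul_edge e := by
    rw [partialOp_mul]
    congr 1
    funext x
    simp only [restrictSrc, consEdge, removeEdge]
    split_ifs <;> simp_all [removeEdge, uncons_cons, eq_comm]
  vert_eq_sum v hfin hne := by
    simp only [partialOp_mul, bind_removeEdge_consEdge, sum_partialOp_eq]
    congr 1
    funext x
    simp [restrictSrc, src_eq_iff_of_isRegular ⟨hfin, hne⟩]

end BoundaryPath

lemma vert_ne_zero (v : G.V) : vert K G v ≠ 0 := by
  obtain ⟨x, rfl⟩ := BoundaryPath.exists_src_eq v
  intro h
  have := congr_arg (fun a => (BoundaryPath.isLeavittFamily_partialOp K G).lift K a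
    (Finsupp.single x 1)) h
  simp [IsLeavittFamily.lift_vert, partialOp_single, BoundaryPath.restrictSrc] at this

lemma ghost_ne_zero (e : G.E) : ghost K G e ≠ 0 := fun h =>
  vert_ne_zero (G.r e) <| by rw [← (isLeavittFamily K G).ghost_mul_edge, h, zero_mul]

lemma ghost_mul_sum_vert [Fintype G.V] (e : G.E) :
    ghost K G e * ∑ v, vert K G v = ghost K G e := by
  rw [Finset.mul_sum, Finset.sum_eq_single (G.s e) (fun v _ hv => ?_) (by simp),
    (isLeavittFamily K G).ghost_mul_vert]
  rw [← (isLeavittFamily K G).ghost_mul_vert, mul_assoc,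
    (isLeavittFamily K G).vert_mul_vert_ne (Ne.symm hv), mul_zero]

lemma sum_vert_mem_component_zero [Fintype G.V] : ∑ v, vert K G v ∈ component K G 0 :=
  sum_mem fun v _ => Submodule.subset_span
    ⟨[], [], v, .nil, .nil, by simp, by simp, by simp, by simp [pathProd, starProd]⟩

/-- A monomial `p q*` of degree one starts with a real edge. -/
lemma exists_finset_ghost_mul_eq_zero {x : L K G} (hx : x ∈ component K G 1) :
    ∃ s : Finset G.E, ∀ f ∉ s, ghost K G f * x = 0 := by
  classical
  induction hx using Submodule.span_induction with
  | mem x hx =>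
    obtain ⟨p, q, v, -, -, -, -, hlen, rfl⟩ := hx
    obtain ⟨e, p, rfl⟩ := List.exists_cons_of_length_pos (by omega : 0 < p.length)
    refine ⟨{e}, fun f hf => ?_⟩
    rw [pathProd, List.map_cons, List.prod_cons, ← mul_assoc, ← mul_assoc, ← mul_assoc,
      (isLeavittFamily K G).ghost_mul_edge_ne (by simpa using hf), zero_mul, zero_mul, zero_mul]
  | zero => exact ⟨∅, fun f _ => mul_zero _⟩
  | add x y _ _ hx hy =>
    obtain ⟨s, hs⟩ := hx
    obtain ⟨t, ht⟩ := hy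
    refine ⟨s ∪ t, fun f hf => ?_⟩
    rw [Finset.mem_union, not_or] at hf
    rw [mul_add, hs f hf.1, ht f hf.2, add_zero]
  | smul c x _ hx =>
    obtain ⟨s, hs⟩ := hx
    exact ⟨s, fun f hf => by rw [mul_smul_comm, hs f hf, smul_zero]⟩

end LPAGraph

open LPAGraph in
/-- If a graph `E` has finitely many vertices and its (unital) Leavitt path
algebra, with identity `Σ_{v ∈ E⁰} v`, is graded unit-regular, then `E` is
row-finite. -/
theorem stmt_18 (K : Type) [Field K] (G : LPAGraph) [Fintype G.V]
    (hUR : ∀ n : ℤ, ∀ x ∈ component K G n, ∃ u ∈ component K G (-n),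
      (∃ w ∈ lpa K G,
        u * w = (Finset.univ.sum fun v : G.V => vert K G v) ∧
        w * u = (Finset.univ.sum fun v : G.V => vert K G v)) ∧
      x * u * x = x) :
    ∀ v : G.V, {e : G.E | G.s e = v}.Finite := by
  intro v
  by_contra hinf
  obtain ⟨u, hu, ⟨w, hw, -, hwu⟩, -⟩ := hUR 1 0 (Submodule.zero_mem _)
  have hw₁u : (grading K G w).coeff 1 * u = ∑ v, vert K G v := by
    simpa using coeff_grading_mul_eq hu sum_vert_mem_component_zero hwu
  obtain ⟨s, hs⟩ := exists_finset_ghost_mul_eq_zero (coeff_grading_mem_component hw 1)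
  obtain ⟨f, -, hf⟩ := Set.Infinite.exists_notMem_finset hinf s
  refine ghost_ne_zero (K := K) f ?_
  calc ghost K G f = ghost K G f * ∑ v, vert K G v := (ghost_mul_sum_vert f).symm
    _ = ghost K G f * (grading K G w).coeff 1 * u := by rw [← hw₁u, mul_assoc]
    _ = 0 := by rw [hs f hf, zero_mul]
end
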